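/- Let s₁ ∈ ℝ^{4,2} be lightlike with ⟨p,s₁⟩ ≠ 0, and let s₂₁, s₂₂, s₂₃, s₂₄ be lightlike vectors with ⟨s₁,s₂ⱼ⟩ = 0 for j = 1,…,4 (four curvature spheres of a Dupin cyclide in oriented contact with the curvature sphere s₁ of the other family). Define pⱼ := ⟨p,s₁⟩s₂ⱼ − ⟨p,s₂ⱼ⟩s₁. Then each pⱼ satisfies ⟨pⱼ,pⱼ⟩ = 0 and ⟨pⱼ,p⟩ = 0 (it is the point sphere of the contact element spanned by s₁ and s₂ⱼ), and ⟨pᵢ,pⱼ⟩ = ⟨p,s₁⟩²·⟨s₂ᵢ,s₂ⱼ⟩ for all i, j. Consequently, whenever ⟨s₂₂,s₂₃⟩ ≠ 0 and ⟨s₂₄,s₂₁⟩ ≠ 0, the cross-ratios coincide: (⟨p₁,p₂⟩⟨p₃,p₄⟩)/(⟨p₂,p₃⟩⟨p₄,p₁⟩) = (⟨s₂₁,s₂₂⟩⟨s₂₃,s₂₄⟩)/(⟨s₂₂,s₂₃⟩⟨s₂₄,s₂₁⟩). (Lemma: the cross-ratio of four point spheres on a curvature line of a Dupin cyclide coincides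 with the cross-ratio of the four corresponding non-constant curvature spheres.) -/
import Mathlib


noncomputable section

/-- The vector space ℝ^{4,2}, modeled as `Fin 6 → ℝ`. -/
abbrev R42 : Type := Fin 6 → ℝ

/-- The symmetric bilinear form of signature (4,2) on ℝ^{4,2}. -/
def bform : R42 →ₗ[ℝ] R42 →ₗ[ℝ] ℝ :=
  LinearMap.mk₂ ℝ
    (fun x y => x 0 * y 0 + x 1 * y 1 + x 2 * y 2 + x 3 * y 3 - x 4 * y 4 - x 5 * y 5)
    (fun x x' y => by simp only [Pi.add_apply]; ring)
    (fun c x y => by simp only [Pi.smul_apply, smul_eq_mul]; ring)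
    (fun x y y' => by simp only [Pi.add_apply]; ring)
    (fun c x y => by simp only [Pi.smul_apply, smul_eq_mul]; ring)

/-- A lightlike vector: nonzero and isotropic. Represents an oriented 2-sphere. -/
def IsLightlike (v : R42) : Prop := v ≠ 0 ∧ bform v v = 0

/-- The Lie inversion with respect to the linear sphere complex determined by `a`. -/
def lieInv (a r : R42) : R42 := r - (2 * bform r a / bform a a) • a

lemma bform_comm (x y : R42) : bform x y = bform y x := by
  simp only [bform, LinearMap.mk₂_apply]; ring

lemma bform_key (p s₁ x y : R42) (hs : bform s₁ s₁ = 0)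
    (hx : bform s₁ x = 0) (hy : bform s₁ y = 0) :
    bform (bform p s₁ • x - bform p x • s₁) (bform p s₁ • y - bform p y • s₁) =
      bform p s₁ ^ 2 * bform x y := by
  simp only [map_sub, map_smul, LinearMap.sub_apply, LinearMap.smul_apply, smul_eq_mul,
    bform_comm x s₁, bform_comm y s₁, hx, hy, hs]
  ring

lemma bform_keyp (p s₁ x : R42) :
    bform (bform p s₁ • x - bform p x • s₁) p = 0 := by
  simp only [map_sub, map_smul, LinearMap.sub_apply, LinearMap.smul_apply, smul_eq_mul,
    bform_comm x p, bform_comm s₁ p]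
  ring

/-- The cross-ratio of four point spheres on a curvature line of a Dupin
cyclide coincides with the cross-ratio of the four corresponding curvature spheres:
with `pⱼ = ⟨p,s₁⟩s₂ⱼ − ⟨p,s₂ⱼ⟩s₁` one has `⟨pⱼ,pⱼ⟩ = 0`, `⟨pⱼ,p⟩ = 0`,
`⟨pᵢ,pⱼ⟩ = ⟨p,s₁⟩²⟨s₂ᵢ,s₂ⱼ⟩`, and the cross-ratio expressions agree. -/
theorem stmt_9 (p s₁ s₂₁ s₂₂ s₂₃ s₂₄ : R42)
    (hp : bform p p = -1)
    (hs₁ : IsLightlike s₁) (hps₁ : bform p s₁ ≠ 0)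
    (h₂₁ : IsLightlike s₂₁) (h₂₂ : IsLightlike s₂₂)
    (h₂₃ : IsLightlike s₂₃) (h₂₄ : IsLightlike s₂₄)
    (hc₁ : bform s₁ s₂₁ = 0) (hc₂ : bform s₁ s₂₂ = 0)
    (hc₃ : bform s₁ s₂₃ = 0) (hc₄ : bform s₁ s₂₄ = 0)
    (p₁ p₂ p₃ p₄ : R42)
    (hp₁ : p₁ = bform p s₁ • s₂₁ - bform p s₂₁ • s₁)
    (hp₂ : p₂ = bform p s₁ • s₂₂ - bform p s₂₂ • s₁)
    (hp₃ : p₃ = bform p s₁ • s₂₃ - bform p s₂₃ • s₁)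
    (hp₄ : p₄ = bform p s₁ • s₂₄ - bform p s₂₄ • s₁) :
    (bform p₁ p₁ = 0 ∧ bform p₂ p₂ = 0 ∧ bform p₃ p₃ = 0 ∧ bform p₄ p₄ = 0) ∧
    (bform p₁ p = 0 ∧ bform p₂ p = 0 ∧ bform p₃ p = 0 ∧ bform p₄ p = 0) ∧
    (bform p₁ p₂ = bform p s₁ ^ 2 * bform s₂₁ s₂₂ ∧
     bform p₂ p₃ = bform p s₁ ^ 2 * bform s₂₂ s₂₃ ∧
     bform p₃ p₄ = bform p s₁ ^ 2 * bform s₂₃ s₂₄ ∧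
     bform p₄ p₁ = bform p s₁ ^ 2 * bform s₂₄ s₂₁) ∧
    (bform s₂₂ s₂₃ ≠ 0 → bform s₂₄ s₂₁ ≠ 0 →
      (bform p₁ p₂ * bform p₃ p₄) / (bform p₂ p₃ * bform p₄ p₁) =
      (bform s₂₁ s₂₂ * bform s₂₃ s₂₄) / (bform s₂₂ s₂₃ * bform s₂₄ s₂₁)) := by
  subst hp₁ hp₂ hp₃ hp₄
  have hs := hs₁.2
  have e11 := bform_key p s₁ s₂₁ s₂₁ hs hc₁ hc₁
  have e22 := bform_key p s₁ s₂₂ s₂₂ hs hc₂ hc₂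
  have e33 := bform_key p s₁ s₂₃ s₂₃ hs hc₃ hc₃
  have e44 := bform_key p s₁ s₂₄ s₂₄ hs hc₄ hc₄
  have e12 := bform_key p s₁ s₂₁ s₂₂ hs hc₁ hc₂
  have e23 := bform_key p s₁ s₂₂ s₂₃ hs hc₂ hc₃
  have e34 := bform_key p s₁ s₂₃ s₂₄ hs hc₃ hc₄
  have e41 := bform_key p s₁ s₂₄ s₂₁ hs hc₄ hc₁
  refine ⟨⟨?_, ?_, ?_, ?_⟩, ⟨bform_keyp p s₁ s₂₁, bform_keyp p s₁ s₂₂,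
    bform_keyp p s₁ s₂₃, bform_keyp p s₁ s₂₄⟩, ⟨e12, e23, e34, e41⟩, ?_⟩
  · rw [e11, h₂₁.2]; ring
  · rw [e22, h₂₂.2]; ring
  · rw [e33, h₂₃.2]; ring
  · rw [e44, h₂₄.2]; ring
  · intro hb hd
    rw [e12, e23, e34, e41]
    have hA : bform p s₁ ^ 2 ≠ 0 := pow_ne_zero _ hps₁
    field_simp
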